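/- Let S = (S_t)_{t≥0} be a càdlàg process adapted to 𝔽 and let f be a strictly increasing or strictly decreasing real-valued function defined on a subset of ℝ containing the range of S. Then for every probability measure Q equivalent to P, the process S has no arbitrage in the Cheridito class Π(𝔽) under Q if and only if the process Y_t = f(S_t) has no arbitrage in Π(𝔽) under Q. -/

import Mathlib

open MeasureTheory ProbabilityTheory Filter Set
open scoped NNReal ENNReal

variable {Ω : Type*} {m0 : MeasurableSpace Ω}

/-- A simple predictable integrand with bounded support for the filtration `ℱ`:
`H = g₀ 1_{{0}} + ∑_{j=1}^{n-1} g_j 1_{(τ_j, τ_{j+1}]}` with `n ≥ 2`,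
`0 ≤ τ₁ ≤ ⋯ ≤ τ_n` stopping times, `τ_n` bounded, and `g_j` being `F_{τ_j}`-measurable. -/
structure SimpleStrategy (ℱ : MeasureTheory.Filtration ℝ≥0 m0) where
  n : ℕ
  two_le : 2 ≤ n
  g0 : ℝ
  τ : ℕ → Ω → ℝ≥0
  g : ℕ → Ω → ℝ
  stopping : ∀ j, 1 ≤ j → j ≤ n → MeasureTheory.IsStoppingTime ℱ (fun ω => (τ j ω : WithTop ℝ≥0))
  mono : ∀ j, 1 ≤ j → j < n → ∀ ω, τ j ω ≤ τ (j + 1) ω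
  bounded : ∃ T : ℝ≥0, ∀ ω, τ n ω ≤ T
  g_meas : ∀ j (h1 : 1 ≤ j) (h2 : j < n),
    Measurable[(stopping j h1 h2.le).measurableSpace] (g j)

/-- terminal gain `(H ⬝ X)_∞ = ∑_{j=1}^{n-1} g_j (X_{τ_{j+1}} - X_{τ_j})`. -/
def SimpleStrategy.gains {ℱ : MeasureTheory.Filtration ℝ≥0 m0}
    (H : SimpleStrategy ℱ) (X : ℝ≥0 → Ω → ℝ) (ω : Ω) : ℝ :=
  ∑ j ∈ Finset.Ico 1 H.n, H.g j ω * (X (H.τ (j + 1) ω) ω - X (H.τ j ω) ω)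

/-- membership in `Sʰ(𝔽)` : the jump times are at least `h` apart. -/
def SimpleStrategy.Spaced {ℱ : MeasureTheory.Filtration ℝ≥0 m0}
    (H : SimpleStrategy ℱ) (h : ℝ≥0) : Prop :=
  ∀ j, 1 ≤ j → j < H.n → ∀ ω, H.τ j ω + h ≤ H.τ (j + 1) ω

/-- `H` is an arbitrage for `X` under `μ`. -/
def IsArbitrage {ℱ : MeasureTheory.Filtration ℝ≥0 m0} (μ : MeasureTheory.Measure Ω)
    (X : ℝ≥0 → Ω → ℝ) (H : SimpleStrategy ℱ) : Prop :=
  (∀ᵐ ω ∂μ, 0 ≤ H.gains X ω) ∧ 0 < μ {ω | 0 < H.gains X ω}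

/-- no arbitrage in the class `S(𝔽)` of simple predictable integrands of bounded support. -/
def NoArbitrageSimple (μ : MeasureTheory.Measure Ω) (ℱ : MeasureTheory.Filtration ℝ≥0 m0)
    (X : ℝ≥0 → Ω → ℝ) : Prop :=
  ¬ ∃ H : SimpleStrategy ℱ, IsArbitrage μ X H

/-- no arbitrage in the Cheridito class `Π(𝔽) = ⋃_{h>0} Sʰ(𝔽)`. -/
def NoArbitrageCC (μ : MeasureTheory.Measure Ω) (ℱ : MeasureTheory.Filtration ℝ≥0 m0)
    (X : ℝ≥0 → Ω → ℝ) : Prop :=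
  ¬ ∃ (h : ℝ≥0) (H : SimpleStrategy ℱ), 0 < h ∧ H.Spaced h ∧ IsArbitrage μ X H

/-- `η ∈ L⁰_{+-}` : `η` is neither a nonnegative r.v. that is positive with positive
probability, nor a nonpositive r.v. that is negative with positive probability. -/
def MemLzeroPM (μ : MeasureTheory.Measure Ω) (η : Ω → ℝ) : Prop :=
  ¬ ((∀ᵐ ω ∂μ, 0 ≤ η ω) ∧ 0 < μ {ω | 0 < η ω}) ∧
  ¬ ((∀ᵐ ω ∂μ, η ω ≤ 0) ∧ 0 < μ {ω | η ω < 0})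

/-- all paths are right continuous with left limits. -/
def IsCadlag (X : ℝ≥0 → Ω → ℝ) : Prop :=
  ∀ ω, (∀ t : ℝ≥0, ContinuousWithinAt (fun s => X s ω) (Set.Ici t) t) ∧
    (∀ t : ℝ≥0, 0 < t →
      ∃ l : ℝ, Filter.Tendsto (fun s => X s ω) (nhdsWithin t (Set.Iio t)) (nhds l))

/-- a standard Brownian motion w.r.t. the filtration `ℱ`. -/
def IsStandardBM (μ : MeasureTheory.Measure Ω) (ℱ : MeasureTheory.Filtration ℝ≥0 m0)
    (B : ℝ≥0 → Ω → ℝ) : Prop :=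
  MeasureTheory.Adapted ℱ B ∧ (∀ ω, B 0 ω = 0) ∧ (∀ ω, Continuous fun t => B t ω) ∧
  ∀ s t : ℝ≥0, s < t →
    ProbabilityTheory.Indep
      (MeasurableSpace.comap (fun ω => B t ω - B s ω) (inferInstance : MeasurableSpace ℝ))
      (ℱ s) μ ∧
    MeasureTheory.Measure.map (fun ω => B t ω - B s ω) μ =
      ProbabilityTheory.gaussianReal 0 (t - s)

/-
Only the signs of price increments matter for arbitrage in `Π(𝔽)`. If
`∑ⱼ gⱼ (X_{τⱼ₊₁} - X_{τⱼ})` is an arbitrage and `k` is the first index for which the partial sum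
up to `τₖ₊₁` is already an arbitrage, then holding `gₖ` over `(τₖ, τₖ₊₁]` only on the event that
the gain accumulated up to `τₖ` is nonpositive is again an arbitrage. This one-period strategy is
still `h`-spaced, and its position is `𝔽_{τₖ}`-measurable because right-continuity makes the
price progressively measurable. A strictly monotone `f` multiplies the sign of every increment
of `S` by the same `±1`, so a one-period arbitrage for `S`, with its position multiplied by that
sign, is one for `f ∘ S`, and conversely.
-/

open SignType TopologicalSpace
open scoped Topology

lemma tendsto_min_natCeil_mul_two_pow_div {i s : ℝ≥0} (hs : s ≤ i) :
    Tendsto (fun n : ℕ => min i ((⌈s * 2 ^ n⌉₊ : ℝ≥0) / 2 ^ n)) atTop (𝓝[≥] s) := by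
  have h2 : ∀ n : ℕ, (0 : ℝ≥0) < 2 ^ n := fun n => pow_pos two_pos n
  have hlower : ∀ n : ℕ, s ≤ min i ((⌈s * 2 ^ n⌉₊ : ℝ≥0) / 2 ^ n) := fun n =>
    le_min hs ((le_div_iff₀ (h2 n)).2 (Nat.le_ceil _))
  have hupper : ∀ n : ℕ, min i ((⌈s * 2 ^ n⌉₊ : ℝ≥0) / 2 ^ n) ≤ s + 2⁻¹ ^ n := fun n => by
    refine (min_le_right _ _).trans ((div_le_iff₀ (h2 n)).2 ?_)
    rw [add_mul, ← mul_pow, inv_mul_cancel₀ two_ne_zero, one_pow]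
    exact (Nat.ceil_lt_add_one (by positivity)).le
  have hlim : Tendsto (fun n : ℕ => s + 2⁻¹ ^ n) atTop (𝓝 s) := by
    simpa using tendsto_const_nhds.add
      (NNReal.tendsto_pow_atTop_nhds_zero_of_lt_one (r := 2⁻¹) (by norm_num))
  exact tendsto_nhdsWithin_iff.2 ⟨tendsto_of_tendsto_of_tendsto_of_le_of_le tendsto_const_nhds
    hlim hlower hupper, .of_forall hlower⟩

theorem MeasureTheory.Adapted.isProgressive_of_continuousWithinAt_Ici {β : Type*}
    [TopologicalSpace β] [PseudoMetrizableSpace β] [MeasurableSpace β] [BorelSpace β]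
    {ℱ : Filtration ℝ≥0 m0} {X : ℝ≥0 → Ω → β} (hX : Adapted ℱ X)
    (hrc : ∀ ω t, ContinuousWithinAt (X · ω) (Ici t) t) : IsProgressive ℱ X := by
  intro i
  -- sample `X` at the times `min i (⌈s 2ⁿ⌉ / 2ⁿ)`: they lie in `[s, i]`, decrease to `s`, and
  -- take countably many values
  let mi : MeasurableSpace (Iic i × Ω) := Subtype.instMeasurableSpace.prod (ℱ i)
  refine @measurable_of_tendsto_metrizable (Iic i × Ω) β mi _ _ _ _
    (fun n p => X (min i ((⌈(p.1 : ℝ≥0) * 2 ^ n⌉₊ : ℝ≥0) / 2 ^ n)) p.2) _ (fun n => ?_)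
    (tendsto_pi_nhds.2 fun p => (hrc p.2 p.1).tendsto.comp
      (tendsto_min_natCeil_mul_two_pow_div p.1.2))
  have hfst : Measurable[mi] fun p : Iic i × Ω => (p.1 : ℝ≥0) :=
    measurable_subtype_coe.comp (@measurable_fst _ _ _ (ℱ i))
  have hceil : Measurable[mi] fun p : Iic i × Ω => ⌈(p.1 : ℝ≥0) * 2 ^ n⌉₊ :=
    Nat.measurable_ceil.comp (hfst.mul_const _)
  have hgrid : Measurable[@Prod.instMeasurableSpace _ _ mi _]
      fun q : (Iic i × Ω) × ℕ => X (min i ((q.2 : ℝ≥0) / 2 ^ n)) q.1.2 :=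
    @measurable_from_prod_countable_left _ _ _ mi _ _ _ _ _ fun k =>
      ((hX (min i ((k : ℝ≥0) / 2 ^ n))).mono (ℱ.mono (min_le_left _ _)) le_rfl).comp
        (@measurable_snd _ _ _ (ℱ i))
  exact (hgrid.comp ((@measurable_id _ mi).prodMk hceil) :)

theorem MeasureTheory.IsProgressive.comp_of_measurable_domRestrict {ι β γ : Type*} [Preorder ι]
    [MeasurableSpace ι] [MeasurableSpace β] [MeasurableSpace γ] {ℱ : Filtration ι m0}
    {u : ι → Ω → β} {s : Set β} {f : β → γ} (hu : IsProgressive ℱ u) (hus : ∀ i ω, u i ω ∈ s)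
    (hf : Measurable (s.domRestrict f)) : IsProgressive ℱ fun i ω => f (u i ω) :=
  fun i => hf.comp ((hu i).subtype_mk (h := fun p => hus p.1 p.2))

section Sign

variable {α β : Type*} [AddCommGroup α] [LinearOrder α] [IsOrderedAddMonoid α] [AddCommGroup β]
  [LinearOrder β] [IsOrderedAddMonoid β] {D : Set α} {f : α → β} {a b : α}

lemma StrictMonoOn.sign_sub (hf : StrictMonoOn f D) (ha : a ∈ D) (hb : b ∈ D) :
    sign (f b - f a) = sign (b - a) := by
  rcases lt_trichotomy a b with h | rfl | h
  · rw [sign_pos (sub_pos.2 h), sign_pos (sub_pos.2 (hf ha hb h))]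
  · simp
  · rw [sign_neg (sub_neg.2 h), sign_neg (sub_neg.2 (hf hb ha h))]

lemma StrictAntiOn.sign_sub (hf : StrictAntiOn f D) (ha : a ∈ D) (hb : b ∈ D) :
    sign (f b - f a) = sign (a - b) := by
  rcases lt_trichotomy a b with h | rfl | h
  · rw [sign_neg (sub_neg.2 h), sign_neg (sub_neg.2 (hf ha hb h))]
  · simp
  · rw [sign_pos (sub_pos.2 h), sign_pos (sub_pos.2 (hf hb ha h))]

end Sign

def IsArbitrageGain (μ : Measure Ω) (η : Ω → ℝ) : Prop :=
  (∀ᵐ ω ∂μ, 0 ≤ η ω) ∧ 0 < μ {ω | 0 < η ω}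

section ArbitrageGain

variable {μ : Measure Ω} {η ζ : Ω → ℝ}

lemma IsArbitrageGain.mono_ae (h : IsArbitrageGain μ η) (h0 : ∀ᵐ ω ∂μ, 0 ≤ η ω → 0 ≤ ζ ω)
    (hpos : ∀ᵐ ω ∂μ, 0 < η ω → 0 < ζ ω) : IsArbitrageGain μ ζ :=
  ⟨by filter_upwards [h.1, h0] with ω hη h0ω using h0ω hη, h.2.trans_le (measure_mono_ae hpos)⟩

lemma IsArbitrageGain.of_sign_eq (h : IsArbitrageGain μ η) (hs : ∀ ω, sign (η ω) = sign (ζ ω)) :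
    IsArbitrageGain μ ζ :=
  h.mono_ae (.of_forall fun ω hη => sign_nonneg_iff.1 (hs ω ▸ sign_nonneg_iff.2 hη))
    (.of_forall fun ω hη => sign_eq_one_iff.1 (hs ω ▸ sign_eq_one_iff.2 hη))

lemma exists_isArbitrageGain_indicator_of_sum (ξ : ℕ → Ω → ℝ) {a n : ℕ}
    (h : IsArbitrageGain μ fun ω => ∑ j ∈ Finset.Ico a n, ξ j ω) :
    ∃ k ∈ Finset.Ico a n,
      IsArbitrageGain μ ({ω | ∑ j ∈ Finset.Ico a k, ξ j ω ≤ 0}.indicator (ξ k)) := by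
  induction n with
  | zero => simp [IsArbitrageGain] at h
  | succ n ih =>
    rcases lt_or_ge n a with hna | han
    · simp [Finset.Ico_eq_empty_of_le (show n + 1 ≤ a by omega), IsArbitrageGain] at h
    by_cases hG : IsArbitrageGain μ fun ω => ∑ j ∈ Finset.Ico a n, ξ j ω
    · obtain ⟨k, hk, hk_arb⟩ := ih hG
      exact ⟨k, Finset.Ico_subset_Ico_right n.le_succ hk, hk_arb⟩
    refine ⟨n, Finset.mem_Ico.2 ⟨han, n.lt_succ_self⟩, ?_⟩
    set G := fun ω => ∑ j ∈ Finset.Ico a n, ξ j ω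
    have hsum : ∀ ω, ∑ j ∈ Finset.Ico a (n + 1), ξ j ω = G ω + ξ n ω :=
      fun ω => Finset.sum_Ico_succ_top han _
    simp only [hsum] at h
    change IsArbitrageGain μ ({ω | G ω ≤ 0}.indicator (ξ n))
    by_cases hneg : μ {ω | G ω < 0} = 0
    · -- otherwise `G` would itself be an arbitrage gain
      have hG_nonneg : ∀ᵐ ω ∂μ, 0 ≤ G ω :=
        (measure_eq_zero_iff_ae_notMem.1 hneg).mono fun ω hω => not_lt.1 hω
      have hG_pos : μ {ω | 0 < G ω} = 0 := by
        simpa [IsArbitrageGain, hG_nonneg] using hG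
      have hG_zero : ∀ᵐ ω ∂μ, G ω = 0 := by
        filter_upwards [hG_nonneg, measure_eq_zero_iff_ae_notMem.1 hG_pos] with ω h0 hpos
        exact le_antisymm (not_lt.1 hpos) h0
      refine h.mono_ae ?_ ?_ <;> filter_upwards [hG_zero] with ω hω <;> simp [hω]
    · refine ⟨?_, (pos_iff_ne_zero.2 hneg).trans_le (measure_mono_ae ?_)⟩
      · filter_upwards [h.1] with ω hω
        by_cases hGω : G ω ≤ 0
        · simp only [indicator_apply, mem_ofPred_eq, if_pos hGω]
          linarith
        · simp only [indicator_apply, mem_ofPred_eq, if_neg hGω, le_refl]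
      · filter_upwards [h.1] with ω hω (hGω : G ω < 0)
        change 0 < {ω | G ω ≤ 0}.indicator (ξ n) ω
        simp only [indicator_apply, mem_ofPred_eq, if_pos hGω.le]
        linarith

end ArbitrageGain

namespace SimpleStrategy

variable {ℱ : Filtration ℝ≥0 m0}

lemma τ_le_τ (H : SimpleStrategy ℱ) {i j : ℕ} (hi : 1 ≤ i) (hij : i ≤ j) (hj : j ≤ H.n) (ω : Ω) :
    H.τ i ω ≤ H.τ j ω := by
  induction j, hij using Nat.le_induction with
  | base => exact le_rfl
  | succ j hij ih => exact (ih (by omega)).trans (H.mono j (by omega) (by omega) ω)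

lemma measurable_sum_Ico_gains (H : SimpleStrategy ℱ) {X : ℝ≥0 → Ω → ℝ}
    (hX : IsStronglyProgressive ℱ X) {m : ℕ} (hm1 : 1 ≤ m) (hm : m ≤ H.n) :
    Measurable[(H.stopping m hm1 hm).measurableSpace]
      fun ω => ∑ j ∈ Finset.Ico 1 m, H.g j ω * (X (H.τ (j + 1) ω) ω - X (H.τ j ω) ω) := by
  have hle : ∀ i (hi1 : 1 ≤ i) (hi : i ≤ m), (H.stopping i hi1 (hi.trans hm)).measurableSpace ≤
      (H.stopping m hm1 hm).measurableSpace := fun i hi1 hi =>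
    IsStoppingTime.measurableSpace_mono _ _ fun ω => WithTop.coe_le_coe.2 (H.τ_le_τ hi1 hi hm ω)
  have hXτ : ∀ i (hi1 : 1 ≤ i) (hi : i ≤ m),
      Measurable[(H.stopping m hm1 hm).measurableSpace] fun ω => X (H.τ i ω) ω := fun i hi1 hi =>
    (measurable_stoppedValue hX (H.stopping i hi1 (hi.trans hm))).mono (hle i hi1 hi) le_rfl
  refine Finset.measurable_sum _ fun j hj => ?_
  obtain ⟨hj1, hjm⟩ := Finset.mem_Ico.1 hj
  exact ((H.g_meas j hj1 (by omega)).mono (hle j hj1 hjm.le) le_rfl).mul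
    ((hXτ (j + 1) (by omega) hjm).sub (hXτ j hj1 hjm.le))

section OnePeriod

variable {σ π : Ω → ℝ≥0} (hσ : IsStoppingTime ℱ fun ω => (σ ω : WithTop ℝ≥0))
  (hπ : IsStoppingTime ℱ fun ω => (π ω : WithTop ℝ≥0)) (hσπ : ∀ ω, σ ω ≤ π ω)
  (hπ_bdd : ∃ T, ∀ ω, π ω ≤ T) (g : Ω → ℝ) (hg : Measurable[hσ.measurableSpace] g)

def onePeriod : SimpleStrategy ℱ where
  n := 2
  two_le := le_rfl
  g0 := 0
  τ j := if j ≤ 1 then σ else π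
  g j := if j = 1 then g else 0
  stopping j h1 h2 := by
    interval_cases j
    · simpa using hσ
    · simpa using hπ
  mono j h1 h2 ω := by
    interval_cases j
    simpa using hσπ ω
  bounded := by simpa using hπ_bdd
  g_meas j h1 h2 := by
    interval_cases j
    simpa using hg

lemma isArbitrage_onePeriod_iff {μ : Measure Ω} {X : ℝ≥0 → Ω → ℝ} :
    IsArbitrage μ X (onePeriod hσ hπ hσπ hπ_bdd g hg) ↔
      IsArbitrageGain μ fun ω => g ω * (X (π ω) ω - X (σ ω) ω) := by
  have hIco : Finset.Ico 1 2 = {1} := rfl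
  simp [IsArbitrage, IsArbitrageGain, gains, onePeriod, hIco]

lemma spaced_onePeriod {h : ℝ≥0} (hσπ_h : ∀ ω, σ ω + h ≤ π ω) :
    (onePeriod hσ hπ hσπ hπ_bdd g hg).Spaced h := by
  intro j h1 h2 ω
  obtain rfl : j = 1 := by
    change j < 2 at h2
    omega
  simpa [onePeriod] using hσπ_h ω

end OnePeriod

end SimpleStrategy

section Transfer

variable {ℱ : Filtration ℝ≥0 m0} {μ : Measure Ω}

lemma IsArbitrage.exists_isArbitrageGain_period {X : ℝ≥0 → Ω → ℝ} {H : SimpleStrategy ℱ}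
    (hX : IsStronglyProgressive ℱ X) (harb : IsArbitrage μ X H) :
    ∃ (k : ℕ) (hk1 : 1 ≤ k) (hkn : k < H.n) (g : Ω → ℝ),
      Measurable[(H.stopping k hk1 hkn.le).measurableSpace] g ∧
      IsArbitrageGain μ fun ω => g ω * (X (H.τ (k + 1) ω) ω - X (H.τ k ω) ω) := by
  obtain ⟨k, hk, hk_arb⟩ := exists_isArbitrageGain_indicator_of_sum
    (fun j ω => H.g j ω * (X (H.τ (j + 1) ω) ω - X (H.τ j ω) ω)) (a := 1) (n := H.n) harb
  obtain ⟨hk1, hkn⟩ := Finset.mem_Ico.1 hk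
  refine ⟨k, hk1, hkn, _, (H.g_meas k hk1 hkn).indicator
    (H.measurable_sum_Ico_gains hX hk1 hkn.le (measurableSet_Iic (a := 0))), ?_⟩
  convert hk_arb using 2 with ω
  rw [indicator_mul_left]
  rfl

lemma NoArbitrageCC.of_sign_sub_eq {X Y : ℝ≥0 → Ω → ℝ} (hX : IsStronglyProgressive ℱ X)
    {ε : ℝ} (hε : ε ≠ 0) (hsign : ∀ s t ω, sign (Y t ω - Y s ω) = sign (ε * (X t ω - X s ω)))
    (hY : NoArbitrageCC μ ℱ Y) : NoArbitrageCC μ ℱ X := by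
  rintro ⟨h, H, hh, hH_spaced, harb⟩
  obtain ⟨k, hk1, hkn, g, hg, hg_arb⟩ := harb.exists_isArbitrageGain_period hX
  obtain ⟨T, hT⟩ := H.bounded
  refine hY ⟨h, SimpleStrategy.onePeriod (H.stopping k hk1 hkn.le)
    (H.stopping (k + 1) (by omega) hkn) (H.mono k hk1 hkn)
    ⟨T, fun ω => (H.τ_le_τ (by omega) hkn le_rfl ω).trans (hT ω)⟩ (fun ω => ε * g ω)
    (hg.const_mul ε), hh, SimpleStrategy.spaced_onePeriod _ _ _ _ _ _ (hH_spaced k hk1 hkn), ?_⟩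
  rw [SimpleStrategy.isArbitrage_onePeriod_iff]
  refine hg_arb.of_sign_eq fun ω => ?_
  calc sign (g ω * (X (H.τ (k + 1) ω) ω - X (H.τ k ω) ω))
      = sign ((ε * ε) * (g ω * (X (H.τ (k + 1) ω) ω - X (H.τ k ω) ω))) := by
        rw [sign_mul (ε * ε), sign_pos (mul_self_pos.2 hε), one_mul]
    _ = sign (ε * g ω) * sign (ε * (X (H.τ (k + 1) ω) ω - X (H.τ k ω) ω)) := by
        rw [← sign_mul]
        congr 1
        ring
    _ = sign (ε * g ω * (Y (H.τ (k + 1) ω) ω - Y (H.τ k ω) ω)) := by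
        rw [← hsign, ← sign_mul]

theorem noArbitrageCC_iff_of_sign_sub_eq {X Y : ℝ≥0 → Ω → ℝ} (hX : IsStronglyProgressive ℱ X)
    (hY : IsStronglyProgressive ℱ Y) {ε : ℝ} (hε : ε ≠ 0)
    (hsign : ∀ s t ω, sign (Y t ω - Y s ω) = sign (ε * (X t ω - X s ω))) :
    NoArbitrageCC μ ℱ X ↔ NoArbitrageCC μ ℱ Y :=
  ⟨.of_sign_sub_eq hY (inv_ne_zero hε) fun s t ω => by
      rw [sign_mul, hsign, ← sign_mul, inv_mul_cancel_left₀ hε],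
    .of_sign_sub_eq hX hε hsign⟩

end Transfer

theorem stmt1_general
    (ℱ : MeasureTheory.Filtration ℝ≥0 m0)
    (S : ℝ≥0 → Ω → ℝ) (hadapted : MeasureTheory.Adapted ℱ S) (hcadlag : IsCadlag S)
    (D : Set ℝ) (f : ℝ → ℝ) (hf : StrictMonoOn f D ∨ StrictAntiOn f D)
    (hrange : ∀ t ω, S t ω ∈ D)
    (Q : MeasureTheory.Measure Ω) :
    NoArbitrageCC Q ℱ S ↔ NoArbitrageCC Q ℱ (fun t ω => f (S t ω)) := by
  have hS : IsProgressive ℱ S :=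
    hadapted.isProgressive_of_continuousWithinAt_Ici fun ω t => (hcadlag ω).1 t
  have hf_meas : Measurable (D.domRestrict f) := hf.elim
    (fun h => Monotone.measurable fun a b hab => h.monotoneOn a.2 b.2 hab)
    (fun h => Antitone.measurable fun a b hab => h.antitoneOn a.2 b.2 hab)
  obtain ⟨ε, hε, hsign⟩ :
      ∃ ε : ℝ, ε ≠ 0 ∧ ∀ a ∈ D, ∀ b ∈ D, sign (f b - f a) = sign (ε * (b - a)) :=
    hf.elim (fun h => ⟨1, one_ne_zero, fun a ha b hb => by rw [one_mul, h.sign_sub ha hb]⟩)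
      fun h => ⟨-1, by norm_num, fun a ha b hb => by rw [neg_one_mul, neg_sub, h.sign_sub ha hb]⟩
  exact noArbitrageCC_iff_of_sign_sub_eq hS.isStronglyProgressive
    (hS.comp_of_measurable_domRestrict hrange hf_meas).isStronglyProgressive hε
    fun s t ω => hsign _ (hrange s ω) _ (hrange t ω)

/-- **Theorem 2.** For a càdlàg adapted process `S` and a strictly monotone function `f`
defined on a set containing the range of `S`, no arbitrage of `S` in `Π(𝔽)` is
equivalent to no arbitrage of `f ∘ S` in `Π(𝔽)`, under any measure `Q` equivalent to `P`. -/
theorem stmt1 (P : MeasureTheory.Measure Ω) [MeasureTheory.IsProbabilityMeasure P]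
    (ℱ : MeasureTheory.Filtration ℝ≥0 m0)
    (S : ℝ≥0 → Ω → ℝ) (hadapted : MeasureTheory.Adapted ℱ S) (hcadlag : IsCadlag S)
    (D : Set ℝ) (f : ℝ → ℝ) (hf : StrictMonoOn f D ∨ StrictAntiOn f D)
    (hrange : ∀ t ω, S t ω ∈ D)
    (Q : MeasureTheory.Measure Ω) [MeasureTheory.IsProbabilityMeasure Q]
    (hQP : Q ≪ P) (hPQ : P ≪ Q) :
    NoArbitrageCC Q ℱ S ↔ NoArbitrageCC Q ℱ (fun t ω => f (S t ω)) :=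
  stmt1_general ℱ S hadapted hcadlag D f hf hrange Q
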